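/- arXiv:math/0104235 — 6 statements merged into one kernel-verified Lean document; each statement's English description precedes it below -/
import Mathlib

section
/- Let m ≥ 1 be a natural number, let α : Fin m → ℕ with α i ≥ 1 for all i, and let A, B, M, K ≥ 0, P > 0, c > 0 and 0 < q < 1 be real numbers such that for every i, c²·(m·A + M/(α i + 2)) < (α i + 1)²·(α i)·P² − c·(α i + 1)·((α i)·B·m + K). Fix k ∈ ℕ. Suppose e : Fin m → ℝ satisfies |e i| < c·q^(3^k) for all i, and suppose e' : Fin m → ℝ satisfies, for every i, e' i = [ (1/(α i + 1)!)·(e i)²·(∑_{s} A_{i s}·(e s)) + (1/(α i + 2)!)·Φ_i·(e i)³ ] / [ (1/(α i − 1)!)·((α i + 1)·(f_i)² + ∑_{s} B_{i s}·(e s)) + (1/(α i)!)·Ψ_i·(e i) ], where the real coefficients satisfy |A_{i s}| ≤ A, |B_{i s}| ≤ B, |Φ_i| ≤ M, |Ψ_i| ≤ K and |f_i| ≥ P for all i, s. Then |e' i| < c·q^(3^(k+1)) for every i. -/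
/-!
Multiplying numerator and denominator of the error representation by `(α i + 1)!` clears the
factorials. With `ε = c q^(3^k)` the numerator is then at most `ε³ (m A + M / (α i + 2))`, while
the denominator, bounded below using only `|e s| ≤ ε ≤ c`, is at least
`(α i + 1)² α i P² - c (α i + 1) (α i B m + K)`, which by hypothesis exceeds
`c² (m A + M / (α i + 2))`. Hence `|e' i| < ε³ / c² = c q^(3^(k+1))`.
-/

open Finset

lemma abs_mul_le_of_abs_le {a b A B : ℝ} (ha : |a| ≤ A) (hb : |b| ≤ B) : |a * b| ≤ A * B := by
  rw [abs_mul]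
  exact mul_le_mul ha hb (abs_nonneg b) ((abs_nonneg a).trans ha)

lemma abs_sum_mul_le {ι : Type*} [Fintype ι] {a x : ι → ℝ} {A ε : ℝ}
    (ha : ∀ s, |a s| ≤ A) (hx : ∀ s, |x s| ≤ ε) :
    |∑ s, a s * x s| ≤ Fintype.card ι * A * ε := by
  calc |∑ s, a s * x s| ≤ ∑ s, |a s * x s| := abs_sum_le_sum_abs _ _
    _ ≤ ∑ _s : ι, A * ε := sum_le_sum fun s _ => abs_mul_le_of_abs_le (ha s) (hx s)
    _ = Fintype.card ι * A * ε := by simp [mul_assoc]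

lemma factorial_weighted_quotient_eq (n : ℕ) (hn : 1 ≤ n) (p S Φ r U Ψ x : ℝ) :
    (1 / ((n + 1).factorial : ℝ) * p * S + 1 / ((n + 2).factorial : ℝ) * Φ * r) /
        (1 / ((n - 1).factorial : ℝ) * U + 1 / (n.factorial : ℝ) * Ψ * x) =
      (p * S + Φ * r / (n + 2)) / ((n + 1) * n * U + (n + 1) * (Ψ * x)) := by
  obtain ⟨j, rfl⟩ := Nat.exists_eq_add_of_le' hn
  simp only [Nat.add_sub_cancel, Nat.factorial_succ, Nat.cast_mul, Nat.cast_add, Nat.cast_one]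
  have : (0 : ℝ) < j.factorial := by positivity
  field_simp
  ring

lemma abs_cube_error_le {x S Φ ε σ M d : ℝ} (hx : |x| ≤ ε) (hS : |S| ≤ σ * ε) (hΦ : |Φ| ≤ M)
    (hd : 0 < d) : |x ^ 2 * S + Φ * x ^ 3 / d| ≤ ε ^ 3 * (σ + M / d) := by
  have hx2 : |x ^ 2| ≤ ε ^ 2 := by
    rw [abs_pow]; exact pow_le_pow_left₀ (abs_nonneg x) hx 2
  have hx3 : |x ^ 3| ≤ ε ^ 3 := by
    rw [abs_pow]; exact pow_le_pow_left₀ (abs_nonneg x) hx 3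
  calc |x ^ 2 * S + Φ * x ^ 3 / d| ≤ |x ^ 2 * S| + |Φ * x ^ 3 / d| := abs_add_le _ _
    _ = |x ^ 2 * S| + |Φ * x ^ 3| / d := by rw [abs_div, abs_of_pos hd]
    _ ≤ ε ^ 2 * (σ * ε) + M * ε ^ 3 / d := by
        gcongr
        · exact abs_mul_le_of_abs_le hx2 hS
        · exact abs_mul_le_of_abs_le hΦ hx3
    _ = ε ^ 3 * (σ + M / d) := by ring

lemma weighted_denominator_ge {n f S Ψx P m B K c : ℝ} (hn : 0 ≤ n) (hP : 0 ≤ P) (hf : P ≤ |f|)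
    (hS : |S| ≤ m * B * c) (hΨx : |Ψx| ≤ K * c) :
    (n + 1) ^ 2 * n * P ^ 2 - c * (n + 1) * (n * B * m + K) ≤
      (n + 1) * n * ((n + 1) * f ^ 2 + S) + (n + 1) * Ψx := by
  have hf2 : P ^ 2 ≤ f ^ 2 := by rw [← sq_abs f]; exact pow_le_pow_left₀ hP hf 2
  have hS' := (neg_abs_le S).trans' (neg_le_neg hS)
  have hΨx' := (neg_abs_le Ψx).trans' (neg_le_neg hΨx)
  have hn1 : 0 ≤ n + 1 := by positivity
  have hnn1 : 0 ≤ (n + 1) * n := by positivity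
  linarith [mul_le_mul_of_nonneg_left hf2 (mul_nonneg hnn1 hn1),
    mul_le_mul_of_nonneg_left hS' hnn1, mul_le_mul_of_nonneg_left hΨx' hn1]

lemma abs_div_lt_of_abs_le {x y ε c a : ℝ} (hε : 0 < ε) (hc : 0 < c) (hx : |x| ≤ ε ^ 3 * a)
    (hy : c ^ 2 * a < y) : |x / y| < ε ^ 3 / c ^ 2 := by
  have ha : 0 ≤ a := nonneg_of_mul_nonneg_right ((abs_nonneg x).trans hx) (by positivity)
  have hy0 : 0 < y := (by positivity : 0 ≤ c ^ 2 * a).trans_lt hy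
  rw [abs_div, abs_of_pos hy0, div_lt_div_iff₀ hy0 (by positivity)]
  calc |x| * c ^ 2 ≤ ε ^ 3 * a * c ^ 2 := by gcongr
    _ = ε ^ 3 * (c ^ 2 * a) := by ring
    _ < ε ^ 3 * y := by gcongr

theorem obreshkoff_ehrlich_one_step_error_general
    (m : ℕ) (α : Fin m → ℕ) (hα : ∀ i, 1 ≤ α i)
    (A B M K P c q : ℝ)
    (hP : 0 < P) (hc : 0 < c) (hq0 : 0 < q) (hq1 : q < 1)
    (hineq : ∀ i, c ^ 2 * ((m : ℝ) * A + M / ((α i : ℝ) + 2)) <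
      ((α i : ℝ) + 1) ^ 2 * (α i : ℝ) * P ^ 2
        - c * ((α i : ℝ) + 1) * ((α i : ℝ) * B * (m : ℝ) + K))
    (k : ℕ) (e e' : Fin m → ℝ)
    (he : ∀ i, |e i| < c * q ^ (3 ^ k))
    (Acoef Bcoef : Fin m → Fin m → ℝ) (Φ Ψ fval : Fin m → ℝ)
    (hAc : ∀ i s, |Acoef i s| ≤ A) (hBc : ∀ i s, |Bcoef i s| ≤ B)
    (hΦ : ∀ i, |Φ i| ≤ M) (hΨ : ∀ i, |Ψ i| ≤ K) (hf : ∀ i, P ≤ |fval i|)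
    (he' : ∀ i, e' i =
      ((1 / ((α i + 1).factorial : ℝ)) * (e i) ^ 2 * (∑ s, Acoef i s * e s)
          + (1 / ((α i + 2).factorial : ℝ)) * Φ i * (e i) ^ 3) /
        ((1 / ((α i - 1).factorial : ℝ)) *
            (((α i : ℝ) + 1) * (fval i) ^ 2 + ∑ s, Bcoef i s * e s)
          + (1 / ((α i).factorial : ℝ)) * Ψ i * (e i))) :
    ∀ i, |e' i| < c * q ^ (3 ^ (k + 1)) := by
  intro i
  set ε := c * q ^ 3 ^ k
  have hε : 0 < ε := (abs_nonneg _).trans_lt (he i)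
  have hεc : ε ≤ c := mul_le_of_le_one_right hc.le (pow_le_one₀ hq0.le hq1.le)
  have hcube : c * q ^ 3 ^ (k + 1) = ε ^ 3 / c ^ 2 := by
    rw [pow_succ, pow_mul]; field_simp; ring
  have hSA := abs_sum_mul_le (hAc i) fun s => (he s).le
  have hSB := abs_sum_mul_le (hBc i) fun s => (he s).le.trans hεc
  rw [Fintype.card_fin] at hSA hSB
  rw [hcube, he' i, factorial_weighted_quotient_eq _ (hα i)]
  refine abs_div_lt_of_abs_le hε hc (abs_cube_error_le (he i).le hSA (hΦ i) (by positivity)) ?_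
  calc _ < _ := hineq i
    _ ≤ _ := weighted_denominator_ge (by positivity) hP.le (hf i) hSB
        (abs_mul_le_of_abs_le (hΨ i) ((he i).le.trans hεc))

/-- One-step error estimate (the Theorem of the paper) for the generalized
Obreshkoff–Ehrlich iteration, stated in terms of the error representation (12). -/
theorem obreshkoff_ehrlich_one_step_error
    (m : ℕ) (hm : 1 ≤ m) (α : Fin m → ℕ) (hα : ∀ i, 1 ≤ α i)
    (A B M K P c q : ℝ) (hA : 0 ≤ A) (hB : 0 ≤ B) (hM : 0 ≤ M) (hK : 0 ≤ K)
    (hP : 0 < P) (hc : 0 < c) (hq0 : 0 < q) (hq1 : q < 1)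
    (hineq : ∀ i, c ^ 2 * ((m : ℝ) * A + M / ((α i : ℝ) + 2)) <
      ((α i : ℝ) + 1) ^ 2 * (α i : ℝ) * P ^ 2
        - c * ((α i : ℝ) + 1) * ((α i : ℝ) * B * (m : ℝ) + K))
    (k : ℕ) (e e' : Fin m → ℝ)
    (he : ∀ i, |e i| < c * q ^ (3 ^ k))
    (Acoef Bcoef : Fin m → Fin m → ℝ) (Φ Ψ fval : Fin m → ℝ)
    (hAc : ∀ i s, |Acoef i s| ≤ A) (hBc : ∀ i s, |Bcoef i s| ≤ B)
    (hΦ : ∀ i, |Φ i| ≤ M) (hΨ : ∀ i, |Ψ i| ≤ K) (hf : ∀ i, P ≤ |fval i|)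
    (he' : ∀ i, e' i =
      ((1 / ((α i + 1).factorial : ℝ)) * (e i) ^ 2 * (∑ s, Acoef i s * e s)
          + (1 / ((α i + 2).factorial : ℝ)) * Φ i * (e i) ^ 3) /
        ((1 / ((α i - 1).factorial : ℝ)) *
            (((α i : ℝ) + 1) * (fval i) ^ 2 + ∑ s, Bcoef i s * e s)
          + (1 / ((α i).factorial : ℝ)) * Ψ i * (e i))) :
    ∀ i, |e' i| < c * q ^ (3 ^ (k + 1)) :=
  obreshkoff_ehrlich_one_step_error_general m α hα A B M K P c q hP hc hq0 hq1 hineq k e e' he Acoef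
    Bcoef Φ Ψ fval hAc hBc hΦ hΨ hf he'
end

section
/- Let m ≥ 1 be a natural number, let α : Fin m → ℕ with α i ≥ 1 for all i, and let A, B, M, K ≥ 0, P > 0, c > 0 and 0 < q < 1 be real numbers such that for every i, c²·(m·A + M/(α i + 2)) < (α i + 1)²·(α i)·P² − c·(α i + 1)·((α i)·B·m + K). Let e : ℕ → Fin m → ℝ be a sequence of error vectors such that |e 0 i| < c·q^(3^0) for all i, and such that for every k and every i, e (k+1) i = [ (1/(α i + 1)!)·(e k i)²·(∑_{s} A^{[k]}_{i s}·(e k s)) + (1/(α i + 2)!)·Φ^{[k]}_i·(e k i)³ ] / [ (1/(α i − 1)!)·((α i + 1)·(f_i)² + ∑_{s} B^{[k]}_{i s}·(e k s)) + (1/(α i)!)·Ψ^{[k]}_i·(e k i) ], where for all k, i, s the real coefficients satisfy |A^{[k]}_{i s}| ≤ A, |B^{[k]}_{i s}| ≤ B, |Φ^{[k]}_i| ≤ M, |Ψ^{[k]}_i| ≤ K and |f_i| ≥ P. Then for every k ∈ ℕ and every i, |e k i| < c·q^(3^k); in particular e k i → 0 as k → ∞ for every i. -/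
/-!
Normalising by `(a + 1)!`, the new error is a quotient whose numerator is `O(ε³)` and whose
denominator stays away from zero as long as all current errors are below `ε ≤ c`. The hypothesis
on `c` is exactly what makes the quotient smaller than `ε³ / c²`, and
`(c q^(3^k))³ / c² = c q^(3^(k+1))`, so the bound propagates by induction.
-/

open Filter Topology

theorem abs_sum_mul_le_card_mul {ι : Type*} [Fintype ι] {a x : ι → ℝ} {A ε : ℝ}
    (ha : ∀ s, |a s| ≤ A) (hx : ∀ s, |x s| ≤ ε) :
    |∑ s, a s * x s| ≤ Fintype.card ι * (A * ε) :=
  calc |∑ s, a s * x s| ≤ ∑ s, |a s * x s| := Finset.abs_sum_le_sum_abs _ _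
    _ ≤ ∑ _s : ι, A * ε := Finset.sum_le_sum fun s _ => by
        rw [abs_mul]
        exact mul_le_mul (ha s) (hx s) (abs_nonneg _) ((abs_nonneg _).trans (ha s))
    _ = Fintype.card ι * (A * ε) := by simp

theorem abs_div_lt_of_abs_le_mul {N D X Y r t : ℝ} (hr : 0 < r) (ht : 0 < t)
    (hN : |N| ≤ t * X) (hD : Y ≤ |D|) (hXY : r * X < Y) : |N / D| < t / r := by
  have hX : 0 ≤ X := nonneg_of_mul_nonneg_right ((abs_nonneg N).trans hN) ht
  have hD0 : 0 < |D| := (mul_nonneg hr.le hX).trans_lt (hXY.trans_le hD)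
  rw [abs_div, div_lt_div_iff₀ hD0 hr]
  calc |N| * r ≤ t * X * r := by gcongr
    _ = t * (r * X) := by ring
    _ < t * |D| := by gcongr; exact hXY.trans_le hD

/-- The error representation (12) for a zero of multiplicity `a`: `SA`, `SB` stand for the sums
`∑ₛ A_{is} e_s`, `∑ₛ B_{is} e_s`, and `φ`, `ψ`, `f` for `Φ_i`, `Ψ_i`, `f_i`. -/
noncomputable def obreshkoffEhrlichError (a : ℕ) (e SA SB φ ψ f : ℝ) : ℝ :=
  ((1 / ((a + 1).factorial : ℝ)) * e ^ 2 * SA + (1 / ((a + 2).factorial : ℝ)) * φ * e ^ 3) /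
    ((1 / ((a - 1).factorial : ℝ)) * (((a : ℝ) + 1) * f ^ 2 + SB) + (1 / (a.factorial : ℝ)) * ψ * e)

theorem obreshkoffEhrlichError_eq {a : ℕ} (ha : 1 ≤ a) (e SA SB φ ψ f : ℝ) :
    obreshkoffEhrlichError a e SA SB φ ψ f =
      (e ^ 2 * SA + φ * e ^ 3 / (a + 2)) /
        ((a + 1) * a * ((a + 1) * f ^ 2 + SB) + (a + 1) * ψ * e) := by
  obtain ⟨b, rfl⟩ : ∃ b, a = b + 1 := ⟨a - 1, by omega⟩
  have hb : ((b + 1 + 1).factorial : ℝ) ≠ 0 := by positivity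
  rw [obreshkoffEhrlichError, ← mul_div_mul_right _ _ hb]
  simp only [Nat.add_sub_cancel, Nat.factorial_succ (b + 1 + 1), Nat.factorial_succ (b + 1),
    Nat.factorial_succ b, show b + 1 + 2 = b + 1 + 1 + 1 from rfl]
  push_cast
  field_simp
  ring

theorem abs_sq_mul_add_mul_cube_div_le {e S φ A M ε d : ℝ} (hd : 0 < d) (he : |e| ≤ ε)
    (hS : |S| ≤ A * ε) (hφ : |φ| ≤ M) :
    |e ^ 2 * S + φ * e ^ 3 / d| ≤ ε ^ 3 * (A + M / d) :=
  calc |e ^ 2 * S + φ * e ^ 3 / d| ≤ |e| ^ 2 * |S| + |φ| * |e| ^ 3 / d := by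
        refine (abs_add_le _ _).trans_eq ?_
        rw [abs_mul, abs_div, abs_mul, abs_pow, abs_pow, abs_of_pos hd]
    _ ≤ ε ^ 2 * (A * ε) + M * ε ^ 3 / d := by
        have hε : 0 ≤ ε := (abs_nonneg e).trans he
        have hM : 0 ≤ M := (abs_nonneg φ).trans hφ
        gcongr
    _ = ε ^ 3 * (A + M / d) := by ring

theorem sub_le_abs_mul_add_mul {a e S ψ f B K P ε : ℝ} (ha : 0 ≤ a) (hP : 0 ≤ P) (he : |e| ≤ ε)
    (hS : |S| ≤ B * ε) (hψ : |ψ| ≤ K) (hf : P ≤ |f|) :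
    (a + 1) ^ 2 * a * P ^ 2 - ε * (a + 1) * (a * B + K) ≤
      |(a + 1) * a * ((a + 1) * f ^ 2 + S) + (a + 1) * ψ * e| := by
  have hPf : P ^ 2 ≤ f ^ 2 := by rw [← sq_abs f]; gcongr
  have hψe : |ψ * e| ≤ K * ε := by
    rw [abs_mul]; exact mul_le_mul hψ he (abs_nonneg e) ((abs_nonneg ψ).trans hψ)
  have hf' : (a + 1) * a * ((a + 1) * P ^ 2) ≤ (a + 1) * a * ((a + 1) * f ^ 2) := by gcongr
  have hS' : (a + 1) * a * -(B * ε) ≤ (a + 1) * a * S := by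
    gcongr; linarith [neg_abs_le S]
  have hψe' : (a + 1) * -(K * ε) ≤ (a + 1) * (ψ * e) := by
    gcongr; linarith [neg_abs_le (ψ * e)]
  calc (a + 1) ^ 2 * a * P ^ 2 - ε * (a + 1) * (a * B + K)
      ≤ (a + 1) * a * ((a + 1) * f ^ 2 + S) + (a + 1) * (ψ * e) := by linarith
    _ ≤ _ := by rw [← mul_assoc]; exact le_abs_self _

theorem abs_obreshkoffEhrlichError_lt {a : ℕ} (ha : 1 ≤ a) {e SA SB φ ψ f A B M K P c ε : ℝ}
    (hP : 0 ≤ P) (hε : 0 < ε) (hεc : ε ≤ c) (he : |e| ≤ ε) (hSA : |SA| ≤ A * ε)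
    (hSB : |SB| ≤ B * ε) (hφ : |φ| ≤ M) (hψ : |ψ| ≤ K) (hf : P ≤ |f|)
    (hc : c ^ 2 * (A + M / (a + 2)) <
      ((a : ℝ) + 1) ^ 2 * a * P ^ 2 - c * (a + 1) * (a * B + K)) :
    |obreshkoffEhrlichError a e SA SB φ ψ f| < ε ^ 3 / c ^ 2 := by
  have hc0 : 0 < c := hε.trans_le hεc
  have hB : 0 ≤ B := nonneg_of_mul_nonneg_left ((abs_nonneg SB).trans hSB) hε
  have hK : 0 ≤ K := (abs_nonneg ψ).trans hψ
  -- the denominator bound only improves when `c` is replaced by the smaller `ε`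
  have hcε : ε * (a + 1) * (a * B + K) ≤ c * (a + 1) * (a * B + K) := by gcongr
  rw [obreshkoffEhrlichError_eq ha]
  exact abs_div_lt_of_abs_le_mul (by positivity) (by positivity)
    (abs_sq_mul_add_mul_cube_div_le (by positivity) he hSA hφ)
    (sub_le_abs_mul_add_mul (Nat.cast_nonneg a) hP he hSB hψ hf) (by linarith)

theorem mul_pow_three_pow_succ {c : ℝ} (hc : c ≠ 0) (q : ℝ) (k : ℕ) :
    c * q ^ 3 ^ (k + 1) = (c * q ^ 3 ^ k) ^ 3 / c ^ 2 := by
  rw [pow_succ, pow_mul]; field_simp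

theorem abs_lt_mul_pow_three_pow {ι : Type*} {e : ℕ → ι → ℝ} {c q : ℝ} (hc : 0 < c)
    (hq0 : 0 < q) (hq1 : q ≤ 1) (he0 : ∀ i, |e 0 i| < c * q ^ 3 ^ 0)
    (hstep : ∀ k ε, 0 < ε → ε ≤ c → (∀ s, |e k s| ≤ ε) → ∀ i, |e (k + 1) i| < ε ^ 3 / c ^ 2)
    (k : ℕ) (i : ι) : |e k i| < c * q ^ 3 ^ k := by
  induction k generalizing i with
  | zero => exact he0 i
  | succ k ih =>
    rw [mul_pow_three_pow_succ hc.ne']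
    exact hstep k _ (by positivity) (mul_le_of_le_one_right hc.le (pow_le_one₀ hq0.le hq1))
      (fun s => (ih s).le) i

theorem tendsto_mul_pow_three_pow_atTop_nhds_zero (c : ℝ) {q : ℝ} (hq0 : 0 ≤ q) (hq1 : q < 1) :
    Tendsto (fun k : ℕ => c * q ^ 3 ^ k) atTop (𝓝 0) := by
  simpa using ((tendsto_pow_atTop_nhds_zero_of_lt_one hq0 hq1).comp
    (tendsto_pow_atTop_atTop_of_one_lt (by norm_num : 1 < 3))).const_mul c

theorem obreshkoff_ehrlich_cubic_convergence_general
    (m : ℕ) (α : Fin m → ℕ) (hα : ∀ i, 1 ≤ α i)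
    (A B M K P c q : ℝ)
    (hP : 0 < P) (hc : 0 < c) (hq0 : 0 < q) (hq1 : q < 1)
    (hineq : ∀ i, c ^ 2 * ((m : ℝ) * A + M / ((α i : ℝ) + 2)) <
      ((α i : ℝ) + 1) ^ 2 * (α i : ℝ) * P ^ 2
        - c * ((α i : ℝ) + 1) * ((α i : ℝ) * B * (m : ℝ) + K))
    (e : ℕ → Fin m → ℝ)
    (he0 : ∀ i, |e 0 i| < c * q ^ (3 ^ 0))
    (Acoef Bcoef : ℕ → Fin m → Fin m → ℝ) (Φ Ψ : ℕ → Fin m → ℝ) (fval : Fin m → ℝ)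
    (hAc : ∀ k i s, |Acoef k i s| ≤ A) (hBc : ∀ k i s, |Bcoef k i s| ≤ B)
    (hΦ : ∀ k i, |Φ k i| ≤ M) (hΨ : ∀ k i, |Ψ k i| ≤ K) (hf : ∀ i, P ≤ |fval i|)
    (hrec : ∀ k i, e (k + 1) i =
      ((1 / ((α i + 1).factorial : ℝ)) * (e k i) ^ 2 * (∑ s, Acoef k i s * e k s)
          + (1 / ((α i + 2).factorial : ℝ)) * Φ k i * (e k i) ^ 3) /
        ((1 / ((α i - 1).factorial : ℝ)) *
            (((α i : ℝ) + 1) * (fval i) ^ 2 + ∑ s, Bcoef k i s * e k s)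
          + (1 / ((α i).factorial : ℝ)) * Ψ k i * (e k i))) :
    (∀ k, ∀ i, |e k i| < c * q ^ (3 ^ k)) ∧
      ∀ i, Filter.Tendsto (fun k => e k i) Filter.atTop (nhds 0) := by
  have bound : ∀ k i, |e k i| < c * q ^ 3 ^ k := by
    refine abs_lt_mul_pow_three_pow hc hq0 hq1.le he0 fun k ε hε hεc he i => ?_
    have hsum : ∀ (a : Fin m → Fin m → ℝ) (C : ℝ), (∀ s, |a i s| ≤ C) →
        |∑ s, a i s * e k s| ≤ m * C * ε := fun a C ha => by
      simpa [mul_assoc] using abs_sum_mul_le_card_mul ha he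
    rw [hrec k i]
    exact abs_obreshkoffEhrlichError_lt (hα i) hP.le hε hεc (he i) (hsum _ _ (hAc k i))
      (hsum _ _ (hBc k i)) (hΦ k i) (hΨ k i) (hf i) ((hineq i).trans_eq (by ring))
  exact ⟨bound, fun i => squeeze_zero_norm (fun k => (bound k i).le)
    (tendsto_mul_pow_three_pow_atTop_nhds_zero c hq0.le hq1)⟩

/-- Cubic convergence of the generalized Obreshkoff–Ehrlich iteration: the errors,
written via the error representation (12) with uniformly bounded coefficients,
decay like `c * q ^ (3 ^ k)`, and in particular tend to zero. -/
theorem obreshkoff_ehrlich_cubic_convergence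
    (m : ℕ) (hm : 1 ≤ m) (α : Fin m → ℕ) (hα : ∀ i, 1 ≤ α i)
    (A B M K P c q : ℝ) (hA : 0 ≤ A) (hB : 0 ≤ B) (hM : 0 ≤ M) (hK : 0 ≤ K)
    (hP : 0 < P) (hc : 0 < c) (hq0 : 0 < q) (hq1 : q < 1)
    (hineq : ∀ i, c ^ 2 * ((m : ℝ) * A + M / ((α i : ℝ) + 2)) <
      ((α i : ℝ) + 1) ^ 2 * (α i : ℝ) * P ^ 2
        - c * ((α i : ℝ) + 1) * ((α i : ℝ) * B * (m : ℝ) + K))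
    (e : ℕ → Fin m → ℝ)
    (he0 : ∀ i, |e 0 i| < c * q ^ (3 ^ 0))
    (Acoef Bcoef : ℕ → Fin m → Fin m → ℝ) (Φ Ψ : ℕ → Fin m → ℝ) (fval : Fin m → ℝ)
    (hAc : ∀ k i s, |Acoef k i s| ≤ A) (hBc : ∀ k i s, |Bcoef k i s| ≤ B)
    (hΦ : ∀ k i, |Φ k i| ≤ M) (hΨ : ∀ k i, |Ψ k i| ≤ K) (hf : ∀ i, P ≤ |fval i|)
    (hrec : ∀ k i, e (k + 1) i =
      ((1 / ((α i + 1).factorial : ℝ)) * (e k i) ^ 2 * (∑ s, Acoef k i s * e k s)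
          + (1 / ((α i + 2).factorial : ℝ)) * Φ k i * (e k i) ^ 3) /
        ((1 / ((α i - 1).factorial : ℝ)) *
            (((α i : ℝ) + 1) * (fval i) ^ 2 + ∑ s, Bcoef k i s * e k s)
          + (1 / ((α i).factorial : ℝ)) * Ψ k i * (e k i))) :
    (∀ k, ∀ i, |e k i| < c * q ^ (3 ^ k)) ∧
      ∀ i, Filter.Tendsto (fun k => e k i) Filter.atTop (nhds 0) :=
  obreshkoff_ehrlich_cubic_convergence_general m α hα A B M K P c q hP hc hq0 hq1 hineq e he0 Acoef
    Bcoef Φ Ψ fval hAc hBc hΦ hΨ hf hrec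
end

section
/- Let α ≥ 1 be a natural number, let x_i ∈ ℝ, and let f, Q : ℝ → ℝ be functions of class C^(α+1) such that the iterated derivatives of f of all orders j with 0 ≤ j ≤ α − 1 vanish at x_i (i.e., f has a zero of multiplicity at least α at x_i). Define Φ(x) = (α + 1)·((x − x_i)·f'(x) − α·f(x))·Q(x) − (x − x_i)·f(x)·Q'(x). Then the iterated derivatives of Φ of all orders j with 0 ≤ j ≤ α vanish at x_i: Φ(x_i) = Φ'(x_i) = ⋯ = Φ^(α)(x_i) = 0. -/
/-!
Write `Φ = A * Q - B * Q'` with `A = (α + 1) * ((x - xᵢ) f' - α f)` and `B = (x - xᵢ) f`.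
By the Leibniz rule the Euler operator `(x - xᵢ) d/dx` multiplies the `k`-th derivative at `xᵢ`
by `k`, so `A⁽ᵏ⁾(xᵢ) = (α + 1)(k - α) f⁽ᵏ⁾(xᵢ)` and `B⁽ᵏ⁾(xᵢ) = k f⁽ᵏ⁻¹⁾(xᵢ)`. For `k ≤ α` both
vanish: `f⁽ᵏ⁾(xᵢ) = 0` for `k < α`, and the factor `k - α` kills the case `k = α`. Vanishing of
all derivatives up to order `α` at a point survives multiplication by any `C^α` function,
again by Leibniz.
-/

open Finset

section IteratedDerivAtPoint

variable {𝕜 : Type*} [NontriviallyNormedField 𝕜]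

theorem iteratedDeriv_fun_mul_eq_zero {𝔸 : Type*} [NormedRing 𝔸] [NormedAlgebra 𝕜 𝔸]
    {n : ℕ} {h g : 𝕜 → 𝔸} {a : 𝕜} (hh : ContDiffAt 𝕜 n h a) (hg : ContDiffAt 𝕜 n g a)
    (h_zero : ∀ i ≤ n, iteratedDeriv i h a = 0) :
    iteratedDeriv n (fun y => h y * g y) a = 0 := by
  rw [iteratedDeriv_fun_mul hh hg]
  refine sum_eq_zero fun i hi => ?_
  rw [h_zero i (Nat.le_of_lt_succ (mem_range.mp hi)), mul_zero, zero_mul]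

theorem iteratedDeriv_succ_fun_sub_const (k : ℕ) (a x : 𝕜) :
    iteratedDeriv (k + 1) (fun y => y - a) x = if k = 0 then 1 else 0 := by
  have h_deriv : deriv (fun y : 𝕜 => y - a) = fun _ => 1 := by
    funext y
    simp
  rw [iteratedDeriv_succ', h_deriv]
  rcases k with _ | k <;> simp [iteratedDeriv_const]

theorem iteratedDeriv_sub_mul_at_self {n : ℕ} {g : 𝕜 → 𝕜} {a : 𝕜} (hg : ContDiffAt 𝕜 n g a) :
    iteratedDeriv n (fun y => (y - a) * g y) a = n * iteratedDeriv (n - 1) g a := by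
  rw [iteratedDeriv_fun_mul (by fun_prop) hg]
  rcases n with _ | n
  · simp
  rw [sum_eq_single 1]
  · simp [iteratedDeriv_succ_fun_sub_const]
  · intro i _ hi
    rcases i with _ | i
    · simp
    · simp [iteratedDeriv_succ_fun_sub_const, show i ≠ 0 by omega]
  · simp

theorem iteratedDeriv_sub_mul_deriv_sub_const_mul_at_self {n : ℕ} {g : 𝕜 → 𝕜} {a : 𝕜} (c : 𝕜)
    (hg : ContDiffAt 𝕜 n g a) (hg' : ContDiffAt 𝕜 n (deriv g) a) :
    iteratedDeriv n (fun y => (y - a) * deriv g y - c * g y) a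
      = (n - c) * iteratedDeriv n g a := by
  rw [iteratedDeriv_fun_sub (by fun_prop) (by fun_prop), iteratedDeriv_const_mul_field,
    iteratedDeriv_sub_mul_at_self hg', sub_mul]
  rcases n with _ | n
  · simp
  · rw [Nat.add_sub_cancel, ← iteratedDeriv_succ']

end IteratedDerivAtPoint

theorem obreshkoff_ehrlich_Phi_vanishing_general
    (α : ℕ) (xi : ℝ) (f Q : ℝ → ℝ)
    (hf : ContDiff ℝ (α + 1) f) (hQ : ContDiff ℝ (α + 1) Q)
    (hzero : ∀ j, j ≤ α - 1 → iteratedDeriv j f xi = 0)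
    (Φ : ℝ → ℝ)
    (hΦ : Φ = fun x => ((α : ℝ) + 1) * ((x - xi) * deriv f x - (α : ℝ) * f x) * Q x
        - (x - xi) * f x * deriv Q x) :
    ∀ j, j ≤ α → iteratedDeriv j Φ xi = 0 := by
  have hA : ∀ k ≤ α, iteratedDeriv k
      (fun x => ((α : ℝ) + 1) * ((x - xi) * deriv f x - (α : ℝ) * f x)) xi = 0 := by
    intro k hk
    rw [iteratedDeriv_const_mul_field, iteratedDeriv_sub_mul_deriv_sub_const_mul_at_self _
      (hf.of_le (by norm_cast; omega)).contDiffAt (hf.deriv'.of_le (by norm_cast)).contDiffAt]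
    rcases hk.lt_or_eq with hk | rfl
    · rw [hzero k (by omega), mul_zero, mul_zero]
    · rw [sub_self, zero_mul, mul_zero]
  have hB : ∀ k ≤ α, iteratedDeriv k (fun x => (x - xi) * f x) xi = 0 := fun k hk => by
    rw [iteratedDeriv_sub_mul_at_self (hf.of_le (by norm_cast; omega)).contDiffAt,
      hzero (k - 1) (by omega), mul_zero]
  intro j hj
  have hfj : ContDiff ℝ j f := hf.of_le (by norm_cast; omega)
  have hQj : ContDiff ℝ j Q := hQ.of_le (by norm_cast; omega)
  have hf'j : ContDiff ℝ j (deriv f) := hf.deriv'.of_le (by norm_cast)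
  have hQ'j : ContDiff ℝ j (deriv Q) := hQ.deriv'.of_le (by norm_cast)
  subst hΦ
  rw [iteratedDeriv_fun_sub (by fun_prop) (by fun_prop),
    iteratedDeriv_fun_mul_eq_zero (by fun_prop) (by fun_prop) fun i hi => hA i (hi.trans hj),
    iteratedDeriv_fun_mul_eq_zero (by fun_prop) (by fun_prop) fun i hi => hB i (hi.trans hj),
    sub_zero]

/-- Claim (7) of the paper: the numerator function `Φ` of (6) and all its
derivatives up to order `α` vanish at `x_i`. -/
theorem obreshkoff_ehrlich_Phi_vanishing
    (α : ℕ) (hα : 1 ≤ α) (xi : ℝ) (f Q : ℝ → ℝ)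
    (hf : ContDiff ℝ (α + 1) f) (hQ : ContDiff ℝ (α + 1) Q)
    (hzero : ∀ j, j ≤ α - 1 → iteratedDeriv j f xi = 0)
    (Φ : ℝ → ℝ)
    (hΦ : Φ = fun x => ((α : ℝ) + 1) * ((x - xi) * deriv f x - (α : ℝ) * f x) * Q x
        - (x - xi) * f x * deriv Q x) :
    ∀ j, j ≤ α → iteratedDeriv j Φ xi = 0 :=
  obreshkoff_ehrlich_Phi_vanishing_general α xi f Q hf hQ hzero Φ hΦ
end

section
/- Let α ≥ 1 be a natural number, let x_i, y ∈ ℝ with y ≠ x_i, and let f, Q : ℝ → ℝ be functions of class C^(α+1) on ℝ such that the iterated derivatives of f of all orders j with 0 ≤ j ≤ α − 1 vanish at x_i. Define Ψ(x) = (α + 1)·f'(x)·Q(x) − f(x)·Q'(x). Then there exists η strictly between x_i and y such that Ψ(y) = (α + 1)·f^(α)(x_i)·Q(x_i)·(y − x_i)^(α−1)/(α−1)! + Ψ^(α)(η)·(y − x_i)^α/α!. -/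
/-!
By Leibniz's rule, the `j`-th derivative of `Ψ = (α + 1) f' Q - f Q'` at a point where `f` vanishes
to order `α` keeps only the term in which `f` carries all the derivatives, namely
`(α + 1) f^(j+1)(xᵢ) Q(xᵢ)`. So `Ψ` vanishes to order `α - 1` at `xᵢ`, and its Taylor–Lagrange
expansion of order `α - 1` reduces to the top term plus the remainder.
-/

open Set Finset Nat

theorem taylor_mean_remainder_lagrange_of_contDiff {g : ℝ → ℝ} {x₀ x : ℝ} {n : ℕ}
    (hx : x₀ ≠ x) (hg : ContDiff ℝ (n + 1) g) :
    ∃ η ∈ uIoo x₀ x, g x = ∑ k ∈ range (n + 1), iteratedDeriv k g x₀ * (x - x₀) ^ k / k !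
      + iteratedDeriv (n + 1) g η * (x - x₀) ^ (n + 1) / (n + 1)! := by
  obtain ⟨η, hη, h⟩ := taylor_mean_remainder_lagrange_iteratedDeriv hx hg.contDiffOn
  refine ⟨η, hη, ?_⟩
  have hpoly : taylorWithinEval g n (uIcc x₀ x) x₀ x
      = ∑ k ∈ range (n + 1), iteratedDeriv k g x₀ * (x - x₀) ^ k / k ! := by
    rw [taylor_within_apply]
    refine sum_congr rfl fun k hk => ?_
    have hkn : (k : WithTop ℕ∞) ≤ n + 1 := by norm_cast; grind
    rw [iteratedDerivWithin_eq_iteratedDeriv (uniqueDiffOn_uIcc hx)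
      ((hg.of_le hkn).contDiffAt) left_mem_uIcc, smul_eq_mul]
    ring
  rw [← h, hpoly, add_sub_cancel]

theorem taylor_mean_remainder_lagrange_of_iteratedDeriv_eq_zero {g : ℝ → ℝ} {x₀ x : ℝ} {n : ℕ}
    (hx : x₀ ≠ x) (hg : ContDiff ℝ (n + 1) g) (hflat : ∀ k < n, iteratedDeriv k g x₀ = 0) :
    ∃ η ∈ uIoo x₀ x, g x = iteratedDeriv n g x₀ * (x - x₀) ^ n / n !
      + iteratedDeriv (n + 1) g η * (x - x₀) ^ (n + 1) / (n + 1)! := by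
  obtain ⟨η, hη, h⟩ := taylor_mean_remainder_lagrange_of_contDiff hx hg
  refine ⟨η, hη, ?_⟩
  rwa [sum_range_succ, sum_eq_zero fun k hk => by rw [hflat k (mem_range.mp hk)]; ring,
    zero_add] at h

section

variable {𝕜 : Type*} [NontriviallyNormedField 𝕜] {𝔸 : Type*} [NormedRing 𝔸] [NormedAlgebra 𝕜 𝔸]

theorem iteratedDeriv_mul_of_iteratedDeriv_eq_zero {n : ℕ} {f g : 𝕜 → 𝔸} {x : 𝕜}
    (hf : ContDiffAt 𝕜 n f x) (hg : ContDiffAt 𝕜 n g x)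
    (hflat : ∀ i < n, iteratedDeriv i f x = 0) :
    iteratedDeriv n (fun y => f y * g y) x = iteratedDeriv n f x * g x := by
  rw [iteratedDeriv_fun_mul hf hg, sum_range_succ,
    sum_eq_zero fun i hi => by rw [hflat i (mem_range.mp hi)]; simp]
  simp

theorem iteratedDeriv_mul_deriv_sub_mul_deriv {j : ℕ} {f Q : 𝕜 → 𝕜} {x : 𝕜} (c : 𝕜)
    (hf : ContDiff 𝕜 (j + 1) f) (hQ : ContDiff 𝕜 (j + 1) Q)
    (hflat : ∀ i ≤ j, iteratedDeriv i f x = 0) :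
    iteratedDeriv j (fun y => c * deriv f y * Q y - f y * deriv Q y) x
      = c * iteratedDeriv (j + 1) f x * Q x := by
  have hf' : ContDiff 𝕜 j (deriv f) := hf.deriv'
  have hQ' : ContDiff 𝕜 j (deriv Q) := hQ.deriv'
  have hfj : ContDiff 𝕜 j f := hf.of_le (by norm_cast; omega)
  have hQj : ContDiff 𝕜 j Q := hQ.of_le (by norm_cast; omega)
  have hmain :
      iteratedDeriv j (fun y => deriv f y * Q y) x = iteratedDeriv (j + 1) f x * Q x := by
    rw [iteratedDeriv_mul_of_iteratedDeriv_eq_zero hf'.contDiffAt hQj.contDiffAt,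
      iteratedDeriv_succ']
    intro i hi
    rw [← iteratedDeriv_succ']
    exact hflat (i + 1) hi
  have hrest : iteratedDeriv j (fun y => f y * deriv Q y) x = 0 := by
    rw [iteratedDeriv_mul_of_iteratedDeriv_eq_zero hfj.contDiffAt hQ'.contDiffAt
      fun i hi => hflat i hi.le, hflat j le_rfl, zero_mul]
  simp_rw [mul_assoc c]
  rw [iteratedDeriv_fun_sub (contDiff_const.mul (hf'.mul hQj)).contDiffAt
      (hfj.mul hQ').contDiffAt,
    iteratedDeriv_const_mul c (hf'.mul hQj).contDiffAt, hmain, hrest, sub_zero]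

end

/-- Taylor expansion (11) of the paper for the denominator function `Ψ` of (6). -/
theorem obreshkoff_ehrlich_Psi_taylor
    (α : ℕ) (hα : 1 ≤ α) (xi y : ℝ) (hxy : y ≠ xi) (f Q : ℝ → ℝ)
    (hf : ContDiff ℝ (α + 1) f) (hQ : ContDiff ℝ (α + 1) Q)
    (hzero : ∀ j, j ≤ α - 1 → iteratedDeriv j f xi = 0)
    (Ψ : ℝ → ℝ)
    (hΨ : Ψ = fun x => ((α : ℝ) + 1) * deriv f x * Q x - f x * deriv Q x) :
    ∃ η ∈ Set.Ioo (min xi y) (max xi y),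
      Ψ y = ((α : ℝ) + 1) * iteratedDeriv α f xi * Q xi * (y - xi) ^ (α - 1)
            / ((α - 1).factorial : ℝ)
        + iteratedDeriv α Ψ η * (y - xi) ^ α / ((α).factorial : ℝ) := by
  obtain ⟨n, rfl⟩ : ∃ n, α = n + 1 := ⟨α - 1, by omega⟩
  rw [Nat.add_sub_cancel] at hzero ⊢
  have hΨ_smooth : ContDiff ℝ (n + 1) Ψ := by
    rw [hΨ]
    exact (contDiff_const.mul hf.deriv').mul (hQ.of_le (by norm_cast; omega)) |>.sub
      ((hf.of_le (by norm_cast; omega)).mul hQ.deriv')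
  have hΨ_at : ∀ k ≤ n, iteratedDeriv k Ψ xi = (n + 1 + 1) * iteratedDeriv (k + 1) f xi * Q xi :=
    fun k hk => by
      rw [hΨ]
      push_cast
      exact iteratedDeriv_mul_deriv_sub_mul_deriv _ (hf.of_le (by norm_cast; omega))
        (hQ.of_le (by norm_cast; omega)) fun i hi => hzero i (hi.trans hk)
  obtain ⟨η, hη, htaylor⟩ := taylor_mean_remainder_lagrange_of_iteratedDeriv_eq_zero hxy.symm
    hΨ_smooth fun k hk => by rw [hΨ_at k hk.le, hzero (k + 1) hk, mul_zero, zero_mul]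
  refine ⟨η, hη, ?_⟩
  rw [htaylor, hΨ_at n le_rfl]
  push_cast
  rfl
end

section
/- Let m ≥ 1 be a natural number, let x : Fin m → ℝ be pairwise distinct real numbers, let α : Fin m → ℕ with α j ≥ 1 for all j, and let a ≠ 0 be a real number. Define W : ℝ → ℝ by W(t) = a·∏_{j} (t − x j)^(α j). Then for every i, W^(α i + 1)(x i) / ( (α i + 1)·W^(α i)(x i) ) = ∑_{j ≠ i} (α j) / (x i − x j), where W^(k) denotes the k-th iterated derivative and the denominator (α i + 1)·W^(α i)(x i) is nonzero. -/
open Polynomial Finset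

private lemma eval_iter_deriv_self (k : ℕ) (c : ℝ) (Q : ℝ[X]) :
    ((Polynomial.derivative^[k] ((X - C c) ^ k * Q)).eval c)
      = (k.factorial : ℝ) * Q.eval c := by
  rw [Polynomial.iterate_derivative_mul, Polynomial.eval_finset_sum,
    Finset.sum_eq_single_of_mem 0 (Finset.mem_range.mpr k.succ_pos)]
  · simp [Polynomial.iterate_derivative_X_sub_pow_self, mul_comm]
  · intro b hb hb0
    rw [Polynomial.iterate_derivative_X_sub_pow, Nat.sub_sub_self
      (Finset.mem_range_succ_iff.mp hb)]
    simp [hb0]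

private lemma eval_iter_deriv_succ (k : ℕ) (c : ℝ) (Q : ℝ[X]) :
    ((Polynomial.derivative^[k + 1] ((X - C c) ^ k * Q)).eval c)
      = ((k + 1).factorial : ℝ) * (Polynomial.derivative Q).eval c := by
  rw [Polynomial.iterate_derivative_mul, Polynomial.eval_finset_sum,
    Finset.sum_eq_single_of_mem 1 (by simp [Finset.mem_range])]
  · rw [Nat.add_sub_cancel]
    simp [Polynomial.iterate_derivative_X_sub_pow_self, Nat.factorial_succ,
      Function.iterate_one, mul_comm, mul_assoc, mul_left_comm]
  · intro b hb hb1
    rcases Nat.eq_zero_or_pos b with rfl | hbpos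
    · rw [Nat.sub_zero, Polynomial.iterate_derivative_X_sub_pow]
      simp [Nat.descFactorial_eq_zero_iff_lt.mpr (Nat.lt_succ_self k)]
    · have hb2 : 2 ≤ b := by omega
      rw [Polynomial.iterate_derivative_X_sub_pow]
      have hble : b < k + 2 := Finset.mem_range.mp hb
      have hbk : k - (k + 1 - b) = b - 1 := by omega
      rw [hbk]
      simp [Nat.sub_ne_zero_of_lt (by omega : 1 < b)]

private lemma eval_deriv_prod_pow {ι : Type*} [DecidableEq ι] (s : Finset ι)
    (x : ι → ℝ) (α : ι → ℕ) (c : ℝ) (hroot : ∀ j ∈ s, c - x j ≠ 0)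
    (hα : ∀ j ∈ s, 1 ≤ α j) :
    (Polynomial.derivative (∏ j ∈ s, (X - C (x j)) ^ (α j))).eval c
      = (∏ j ∈ s, (c - x j) ^ (α j)) * ∑ j ∈ s, (α j : ℝ) / (c - x j) := by
  induction s using Finset.induction with
  | empty => simp
  | @insert j s hj ih =>
    rw [Finset.prod_insert hj, Polynomial.derivative_mul, Polynomial.eval_add,
      Polynomial.eval_mul, Polynomial.eval_mul,
      ih (fun l hl => hroot l (Finset.mem_insert_of_mem hl))
         (fun l hl => hα l (Finset.mem_insert_of_mem hl)),
      Finset.prod_insert hj, Finset.sum_insert hj]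
    have hc : c - x j ≠ 0 := hroot j (Finset.mem_insert_self _ _)
    have hα1 : 1 ≤ α j := hα j (Finset.mem_insert_self _ _)
    have hpow : (c - x j) ^ (α j) = (c - x j) ^ (α j - 1) * (c - x j) := by
      rw [← pow_succ]; congr 1; omega
    rw [Polynomial.derivative_X_sub_C_pow]
    simp only [Polynomial.eval_mul, Polynomial.eval_pow, Polynomial.eval_sub,
      Polynomial.eval_X, Polynomial.eval_C, Polynomial.eval_natCast,
      Polynomial.eval_prod]
    rw [mul_add, hpow]
    field_simp

private lemma iteratedDeriv_eval (p : ℝ[X]) (n : ℕ) (t : ℝ) :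
    iteratedDeriv n (fun s => p.eval s) t = (Polynomial.derivative^[n] p).eval t := by
  induction n generalizing p with
  | zero => simp
  | succ n ih =>
    rw [iteratedDeriv_succ', Function.iterate_succ_apply]
    rw [show (deriv fun s => p.eval s) = fun s => (Polynomial.derivative p).eval s from
      funext fun s => Polynomial.deriv p]
    exact ih _

/-- The identity `W^(α_i+1)(x_i) / ((α_i+1)·W^(α_i)(x_i)) = ∑_{j ≠ i} α_j/(x_i − x_j)`
for the node polynomial `W(t) = a·∏ (t − x j)^(α j)`, showing that the method (3)
reduces to the Obreshkoff–Ehrlich method for algebraic polynomials. -/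
theorem node_polynomial_logDeriv_ratio
    (m : ℕ) (hm : 1 ≤ m) (x : Fin m → ℝ) (hx : Function.Injective x)
    (α : Fin m → ℕ) (hα : ∀ j, 1 ≤ α j) (a : ℝ) (ha : a ≠ 0)
    (W : ℝ → ℝ) (hW : W = fun t => a * ∏ j, (t - x j) ^ (α j)) :
    ∀ i, (((α i : ℝ) + 1) * iteratedDeriv (α i) W (x i) ≠ 0) ∧
      iteratedDeriv (α i + 1) W (x i) / (((α i : ℝ) + 1) * iteratedDeriv (α i) W (x i))
        = ∑ j ∈ Finset.univ.erase i, (α j : ℝ) / (x i - x j) := by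
  intro i
  set c := x i with hc
  set k := α i with hk
  set R : ℝ[X] := ∏ j ∈ Finset.univ.erase i, (X - C (x j)) ^ (α j) with hR
  set Q : ℝ[X] := C a * R with hQ
  set P : ℝ[X] := (X - C c) ^ k * Q with hP
  have hdiff : ∀ j ∈ Finset.univ.erase i, c - x j ≠ 0 := by
    intro j hj
    have hji : j ≠ i := Finset.ne_of_mem_erase hj
    exact sub_ne_zero_of_ne fun h => hji (hx h.symm)
  have hWP : W = fun t => P.eval t := by
    rw [hW]; funext t
    rw [hP, hQ, hR]
    simp only [Polynomial.eval_mul, Polynomial.eval_pow, Polynomial.eval_sub,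
      Polynomial.eval_X, Polynomial.eval_C, Polynomial.eval_prod]
    rw [← Finset.mul_prod_erase Finset.univ (fun j => (t - x j) ^ (α j))
      (Finset.mem_univ i)]
    ring
  have hQc : Q.eval c = a * ∏ j ∈ Finset.univ.erase i, (c - x j) ^ (α j) := by
    simp [hQ, hR, Polynomial.eval_prod]
  have hQcne : Q.eval c ≠ 0 := by
    rw [hQc]
    exact mul_ne_zero ha (Finset.prod_ne_zero_iff.mpr fun j hj =>
      pow_ne_zero _ (hdiff j hj))
  have hIk : iteratedDeriv k W c = (k.factorial : ℝ) * Q.eval c := by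
    rw [hWP, iteratedDeriv_eval, hP, eval_iter_deriv_self]
  have hIk1 : iteratedDeriv (k + 1) W c
      = ((k + 1).factorial : ℝ) * (Polynomial.derivative Q).eval c := by
    rw [hWP, iteratedDeriv_eval, hP, eval_iter_deriv_succ]
  have hden : ((k : ℝ) + 1) * iteratedDeriv k W c ≠ 0 := by
    rw [hIk]
    exact mul_ne_zero (by positivity) (mul_ne_zero
      (Nat.cast_ne_zero.mpr k.factorial_ne_zero) hQcne)
  refine ⟨hden, ?_⟩
  have hQ' : (Polynomial.derivative Q).eval c
      = Q.eval c * ∑ j ∈ Finset.univ.erase i, (α j : ℝ) / (c - x j) := by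
    rw [hQ, Polynomial.derivative_C_mul, Polynomial.eval_mul, Polynomial.eval_C, hR,
      eval_deriv_prod_pow _ x α c hdiff (fun j _ => hα j), hQc]
    ring
  rw [hIk1, hIk, hQ', Nat.factorial_succ]
  push_cast
  field_simp
end

section
/- Let α ≥ 1 be a natural number, let x_i ∈ ℝ, and let f : ℝ → ℝ be a function of class C^(α+1) such that the iterated derivatives of f of all orders j with 0 ≤ j ≤ α − 1 vanish at x_i. Define g(x) = (x − x_i)·f'(x) − α·f(x). Then the iterated derivatives of g of all orders j with 0 ≤ j ≤ α vanish at x_i, and g^(α+1)(x_i) = f^(α+1)(x_i). -/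
/-!
By induction, `g⁽ᵏ⁾(x) = (x - xᵢ) f⁽ᵏ⁺¹⁾(x) + (k - α) f⁽ᵏ⁾(x)` for `k ≤ α`. At `x = xᵢ` the first
term dies, and the second dies either because `f⁽ᵏ⁾(xᵢ) = 0` (`k < α`) or because `k = α`. One more
derivative of `(x - xᵢ) f⁽ᵅ⁺¹⁾(x)` at `xᵢ` is `f⁽ᵅ⁺¹⁾(xᵢ)`, which only needs `f⁽ᵅ⁺¹⁾` continuous.
-/

open Topology

variable {𝕜 : Type*} [NontriviallyNormedField 𝕜]

theorem hasDerivAt_sub_smul_of_continuousAt {F : Type*} [NormedAddCommGroup F]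
    [NormedSpace 𝕜 F] {φ : 𝕜 → F} {a : 𝕜} (hφ : ContinuousAt φ a) :
    HasDerivAt (fun x => (x - a) • φ x) (φ a) a := by
  rw [hasDerivAt_iff_tendsto_slope]
  have slope_eq : ∀ᶠ y in 𝓝[≠] a, slope (fun x => (x - a) • φ x) a y = φ y := by
    filter_upwards [self_mem_nhdsWithin] with y hy
    rw [slope_def_module, sub_self, zero_smul, sub_zero, smul_smul,
      inv_mul_cancel₀ (sub_ne_zero.mpr hy), one_smul]
  exact (Filter.tendsto_congr' slope_eq).mpr (hφ.tendsto.mono_left nhdsWithin_le_nhds)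

theorem iteratedDeriv_sub_mul_deriv_sub_const_mul {f : 𝕜 → 𝕜} {k : ℕ}
    (hf : ContDiff 𝕜 (k + 1) f) (a c : 𝕜) :
    iteratedDeriv k (fun x => (x - a) * deriv f x - c * f x) =
      fun x => (x - a) * iteratedDeriv (k + 1) f x + (k - c) * iteratedDeriv k f x := by
  induction k with
  | zero =>
    funext x
    simp only [zero_add, iteratedDeriv_zero, iteratedDeriv_one, Nat.cast_zero]
    ring
  | succ k ih =>
    rw [iteratedDeriv_succ, ih (hf.of_le (by norm_cast; omega))]
    funext x
    have hF' : HasDerivAt (iteratedDeriv (k + 1) f) (iteratedDeriv (k + 2) f x) x := by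
      rw [iteratedDeriv_succ (n := k + 1)]
      exact (hf.differentiable_iteratedDeriv' (k + 1) x).hasDerivAt
    have hF : HasDerivAt (iteratedDeriv k f) (iteratedDeriv (k + 1) f x) x := by
      rw [iteratedDeriv_succ (n := k)]
      exact ((hf.of_le (by norm_cast; omega)).differentiable_iteratedDeriv' k x).hasDerivAt
    have hG : HasDerivAt
        (fun y => (y - a) * iteratedDeriv (k + 1) f y + (k - c) * iteratedDeriv k f y)
        (1 * iteratedDeriv (k + 1) f x + (x - a) * iteratedDeriv (k + 2) f x
          + (k - c) * iteratedDeriv (k + 1) f x) x :=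
      (((hasDerivAt_id x).sub_const a).mul hF').add (hF.const_mul _)
    rw [hG.deriv]
    push_cast
    ring

theorem obreshkoff_ehrlich_bracket_vanishing_general
    (α : ℕ) (xi : ℝ) (f : ℝ → ℝ)
    (hf : ContDiff ℝ (α + 1) f)
    (hzero : ∀ j, j ≤ α - 1 → iteratedDeriv j f xi = 0)
    (g : ℝ → ℝ)
    (hg : g = fun x => (x - xi) * deriv f x - (α : ℝ) * f x) :
    (∀ j, j ≤ α → iteratedDeriv j g xi = 0) ∧
      iteratedDeriv (α + 1) g xi = iteratedDeriv (α + 1) f xi := by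
  subst hg
  constructor
  · intro j hj
    rw [iteratedDeriv_sub_mul_deriv_sub_const_mul (hf.of_le (by norm_cast; omega))]
    rcases hj.eq_or_lt with rfl | hlt
    · simp
    · simp [hzero j (by omega)]
  · rw [iteratedDeriv_succ, iteratedDeriv_sub_mul_deriv_sub_const_mul hf]
    simp only [sub_self, zero_mul, add_zero]
    exact (hasDerivAt_sub_smul_of_continuousAt
      (hf.continuous_iteratedDeriv' (α + 1)).continuousAt).deriv

/-- The key Leibniz computation behind claims (7) and (8) of the paper: the bracket
`g(x) = (x − x_i)·f'(x) − α·f(x)` vanishes to order `α + 1` at `x_i`, with leading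
value `f^(α+1)(x_i)`. -/
theorem obreshkoff_ehrlich_bracket_vanishing
    (α : ℕ) (hα : 1 ≤ α) (xi : ℝ) (f : ℝ → ℝ)
    (hf : ContDiff ℝ (α + 1) f)
    (hzero : ∀ j, j ≤ α - 1 → iteratedDeriv j f xi = 0)
    (g : ℝ → ℝ)
    (hg : g = fun x => (x - xi) * deriv f x - (α : ℝ) * f x) :
    (∀ j, j ≤ α → iteratedDeriv j g xi = 0) ∧
      iteratedDeriv (α + 1) g xi = iteratedDeriv (α + 1) f xi :=
  obreshkoff_ehrlich_bracket_vanishing_general α xi f hf hzero g hg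
end
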